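/- Let K be a fixed compact subset of (0,π). Then there exists a constant C such that for all θ ∈ K, φ ∈ (0,π) and u, v ∈ [−1,1]: |∂_θ q(θ,φ,u,v) − (1/2) sin((θ−φ)/2)| ≤ C · q(θ,φ,u,v). -/

import Mathlib

/-!
With `s = sin (θ/2)`, `c = cos (θ/2)`, the error `∂_θ q − ½ sin ((θ−φ)/2)` equals
`((1−u) c sin (φ/2) − (1−v) s cos (φ/2)) / 2`, while
`q = (1 − cos ((θ−φ)/2)) + (1−u) s sin (φ/2) + (1−v) c cos (φ/2)` is a sum of nonnegative terms.
After multiplying the error by `sin θ = 2 s c`, the factors `c²,s² ≤ 1` let each of its terms be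
bounded by a term of `q`, so `sin θ · |error| ≤ q`; on the compact `K` the function `1 / sin θ` is
bounded, which gives `C`.
-/

open Real Set

noncomputable section

def qFun (θ φ u v : ℝ) : ℝ :=
  1 - u * Real.sin (θ/2) * Real.sin (φ/2) - v * Real.cos (θ/2) * Real.cos (φ/2)

lemma hasDerivAt_qFun (φ u v θ : ℝ) :
    HasDerivAt (fun θ' => qFun θ' φ u v)
      (v / 2 * sin (θ / 2) * cos (φ / 2) - u / 2 * cos (θ / 2) * sin (φ / 2)) θ := by
  have hhalf : HasDerivAt (fun θ' : ℝ => θ' / 2) (1 / 2) θ := (hasDerivAt_id θ).div_const 2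
  have hsin := (hasDerivAt_sin (θ / 2)).comp θ hhalf
  have hcos := (hasDerivAt_cos (θ / 2)).comp θ hhalf
  refine ((((hsin.const_mul u).mul_const (sin (φ / 2))).const_sub 1).sub
    ((hcos.const_mul v).mul_const (cos (φ / 2)))).congr_deriv ?_
  ring

lemma deriv_qFun_sub_half_sin (θ φ u v : ℝ) :
    deriv (fun θ' => qFun θ' φ u v) θ - 1 / 2 * sin ((θ - φ) / 2) =
      ((1 - u) * cos (θ / 2) * sin (φ / 2) - (1 - v) * sin (θ / 2) * cos (φ / 2)) / 2 := by
  rw [(hasDerivAt_qFun φ u v θ).deriv, sub_div, sin_sub]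
  ring

lemma qFun_eq (θ φ u v : ℝ) :
    qFun θ φ u v = (1 - cos ((θ - φ) / 2)) + (1 - u) * sin (θ / 2) * sin (φ / 2)
      + (1 - v) * cos (θ / 2) * cos (φ / 2) := by
  rw [qFun, sub_div, cos_sub]
  ring

lemma le_qFun (θ φ u v : ℝ) :
    (1 - u) * sin (θ / 2) * sin (φ / 2) + (1 - v) * cos (θ / 2) * cos (φ / 2) ≤ qFun θ φ u v := by
  rw [qFun_eq]
  linarith [cos_le_one ((θ - φ) / 2)]

lemma sin_half_nonneg {x : ℝ} (hx : x ∈ Icc 0 π) : 0 ≤ sin (x / 2) :=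
  sin_nonneg_of_nonneg_of_le_pi (by linarith [hx.1]) (by linarith [hx.2, pi_pos])

lemma cos_half_nonneg {x : ℝ} (hx : x ∈ Icc 0 π) : 0 ≤ cos (x / 2) :=
  cos_nonneg_of_mem_Icc ⟨by linarith [hx.1, pi_pos], by linarith [hx.2]⟩

section
variable {θ φ u v : ℝ}

lemma qFun_nonneg (hθ : θ ∈ Icc 0 π) (hφ : φ ∈ Icc 0 π) (hu : u ≤ 1) (hv : v ≤ 1) :
    0 ≤ qFun θ φ u v := by
  have := le_qFun θ φ u v
  have h₁ := mul_nonneg (mul_nonneg (sub_nonneg.2 hu) (sin_half_nonneg hθ)) (sin_half_nonneg hφ)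
  have h₂ := mul_nonneg (mul_nonneg (sub_nonneg.2 hv) (cos_half_nonneg hθ)) (cos_half_nonneg hφ)
  linarith

lemma sin_mul_abs_deriv_qFun_sub_le (hθ : θ ∈ Icc 0 π) (hφ : φ ∈ Icc 0 π) (hu : u ≤ 1)
    (hv : v ≤ 1) :
    sin θ * |deriv (fun θ' => qFun θ' φ u v) θ - 1 / 2 * sin ((θ - φ) / 2)| ≤ qFun θ φ u v := by
  set s := sin (θ / 2)
  set c := cos (θ / 2)
  have hs : 0 ≤ s := sin_half_nonneg hθ
  have hc : 0 ≤ c := cos_half_nonneg hθ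
  set a := (1 - u) * c * sin (φ / 2)
  set b := (1 - v) * s * cos (φ / 2)
  have ha : 0 ≤ a := mul_nonneg (mul_nonneg (sub_nonneg.2 hu) hc) (sin_half_nonneg hφ)
  have hb : 0 ≤ b := mul_nonneg (mul_nonneg (sub_nonneg.2 hv) hs) (cos_half_nonneg hφ)
  have hsin : sin θ = 2 * s * c := by rw [← sin_two_mul]; ring_nf
  have hpyth : s ^ 2 + c ^ 2 = 1 := sin_sq_add_cos_sq _
  have habs : |(a - b) / 2| ≤ (a + b) / 2 := by
    rw [abs_div, abs_two]
    gcongr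
    exact abs_sub_le_iff.2 ⟨by linarith, by linarith⟩
  calc sin θ * |deriv (fun θ' => qFun θ' φ u v) θ - 1 / 2 * sin ((θ - φ) / 2)|
      = 2 * s * c * |(a - b) / 2| := by rw [hsin, deriv_qFun_sub_half_sin]
    _ ≤ 2 * s * c * ((a + b) / 2) := by gcongr
    _ = c ^ 2 * ((1 - u) * s * sin (φ / 2)) + s ^ 2 * ((1 - v) * c * cos (φ / 2)) := by ring
    _ ≤ (1 - u) * s * sin (φ / 2) + (1 - v) * c * cos (φ / 2) := by
      have h₁ := mul_nonneg (mul_nonneg (sub_nonneg.2 hu) hs) (sin_half_nonneg hφ)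
      have h₂ := mul_nonneg (mul_nonneg (sub_nonneg.2 hv) hc) (cos_half_nonneg hφ)
      nlinarith [mul_nonneg (sq_nonneg s) h₁, mul_nonneg (sq_nonneg c) h₂]
    _ ≤ qFun θ φ u v := le_qFun θ φ u v

end

/-- for `θ` in a compact subset `K` of `(0,π)`,
`∂_θ q = (1/2) sin((θ−φ)/2) + Q` with `|Q| ≲ q`, uniformly in
`φ ∈ (0,π)` and `u, v ∈ [−1,1]`. -/
theorem deriv_q_decomposition
    (K : Set ℝ) (hK : IsCompact K) (hKsub : K ⊆ Set.Ioo 0 π) :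
    ∃ C : ℝ, ∀ θ ∈ K, ∀ φ ∈ Set.Ioo 0 π,
      ∀ u ∈ Set.Icc (-1:ℝ) 1, ∀ v ∈ Set.Icc (-1:ℝ) 1,
      |deriv (fun θ' => qFun θ' φ u v) θ - (1/2) * Real.sin ((θ - φ)/2)| ≤
        C * qFun θ φ u v := by
  have hsin_pos : ∀ θ ∈ K, 0 < sin θ := fun θ hθ =>
    sin_pos_of_pos_of_lt_pi (hKsub hθ).1 (hKsub hθ).2
  obtain ⟨C, hC⟩ := hK.exists_bound_of_continuousOn
    (continuous_sin.continuousOn.inv₀ fun θ hθ => (hsin_pos θ hθ).ne')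
  refine ⟨C, fun θ hθ φ hφ u hu v hv => ?_⟩
  have hθ' : θ ∈ Icc 0 π := Ioo_subset_Icc_self (hKsub hθ)
  have hφ' : φ ∈ Icc 0 π := Ioo_subset_Icc_self hφ
  have hinv : (sin θ)⁻¹ ≤ C := by
    simpa [abs_of_pos (hsin_pos θ hθ)] using hC θ hθ
  calc |deriv (fun θ' => qFun θ' φ u v) θ - 1 / 2 * sin ((θ - φ) / 2)|
      = (sin θ)⁻¹ * (sin θ * |deriv (fun θ' => qFun θ' φ u v) θ - 1 / 2 * sin ((θ - φ) / 2)|) := by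
        rw [inv_mul_cancel_left₀ (hsin_pos θ hθ).ne']
    _ ≤ (sin θ)⁻¹ * qFun θ φ u v := by
        gcongr
        · exact (inv_pos.2 (hsin_pos θ hθ)).le
        · exact sin_mul_abs_deriv_qFun_sub_le hθ' hφ' hu.2 hv.2
    _ ≤ C * qFun θ φ u v := by
        gcongr
        exact qFun_nonneg hθ' hφ' hu.2 hv.2

end
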